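/- arXiv:math/0612834 — 7 statements merged into one kernel-verified Lean document; each statement's English description precedes it below -/
import Mathlib

section
/- Let Q = {d : d⁻ ≤ d ≤ d⁺} be a box of disturbance vectors contained in D = [-ξ,ξ]^{Γ²}. Then the union ⋃_{d∈Q} P(d,E) equals the set {x ∈ ℝ^n : -(Σ_{j∈N_i} d⁺_{ij})/|N_i| - ξ ≤ (Σ_{j∈N_i} x_j)/|N_i| - x_i ≤ -(Σ_{j∈N_i} d⁻_{ij})/|N_i| + ξ for all i ∈ Γ}. -/
/-!
Row `i` of the constraint system only sees the disturbance `d` through the scalar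
`u = -(∑_{j ∈ N_i} d_{ij}) / |N_i|`, and the rows of `d` can be chosen independently. As `d i`
ranges over the box `[d⁻ i, d⁺ i]`, this scalar is a continuous antitone image of a convex set,
hence fills exactly the interval between its values at `d⁺ i` and `d⁻ i`. A union of slabs
`[u - ξ, u + ξ]` over `u` in an interval `[p, q]` is the slab `[p - ξ, q + ξ]`.
-/

open Set

theorem Antitone.image_Icc_pi {ι : Type*} {f : (ι → ℝ) → ℝ} (hf : Antitone f)
    (hcont : Continuous f) {lo hi : ι → ℝ} (h : lo ≤ hi) :
    f '' Icc lo hi = Icc (f hi) (f lo) := by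
  refine Subset.antisymm ?_ ?_
  · rintro _ ⟨r, hr, rfl⟩
    exact ⟨hf hr.2, hf hr.1⟩
  · exact ((convex_Icc lo hi).isPreconnected.image f hcont.continuousOn).Icc_subset
      (mem_image_of_mem f (right_mem_Icc.2 h)) (mem_image_of_mem f (left_mem_Icc.2 h))

theorem exists_mem_Icc_sub_le_le_add_iff {α : Type*} [AddCommGroup α] [LinearOrder α]
    [IsOrderedAddMonoid α] {p q ξ y : α} (hpq : p ≤ q) (hξ : 0 ≤ ξ) :
    (∃ u ∈ Icc p q, u - ξ ≤ y ∧ y ≤ u + ξ) ↔ p - ξ ≤ y ∧ y ≤ q + ξ := by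
  constructor
  · rintro ⟨u, ⟨hpu, huq⟩, hlo, hhi⟩
    grind
  · rintro ⟨hlo, hhi⟩
    refine ⟨max p (min y q), ⟨le_max_left _ _, max_le hpq (min_le_right _ _)⟩, ?_, ?_⟩ <;> grind

theorem exists_mem_Icc_forall_apply_iff {ι : Type*} {π : ι → Type*} [∀ i, Preorder (π i)]
    {lo hi : ∀ i, π i} {P : ∀ i, π i → Prop} :
    (∃ d ∈ Icc lo hi, ∀ i, P i (d i)) ↔ ∀ i, ∃ r ∈ Icc (lo i) (hi i), P i r := by
  simp only [← pi_univ_Icc, mem_pi, mem_univ, true_implies]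
  constructor
  · rintro ⟨d, hd, hP⟩ i
    exact ⟨d i, hd i, hP i⟩
  · intro h
    choose d hd hP using h
    exact ⟨d, hd, hP⟩

theorem antitone_neg_sum_div {ι : Type*} (s : Finset ι) {c : ℝ} (hc : 0 < c) :
    Antitone fun r : ι → ℝ => -(∑ j ∈ s, r j) / c := fun r r' hrr' => by
  dsimp only
  gcongr with j
  exact hrr' j

theorem union_P_over_box_general
    (n : ℕ) (G : SimpleGraph (Fin n)) [DecidableRel G.Adj]
    (hN : ∀ i, (G.neighborFinset i).Nonempty)
    (ξ : ℝ) (hξ : 0 < ξ) (dm dp : Fin n → Fin n → ℝ)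
    (hle : ∀ i j, dm i j ≤ dp i j) :
    (⋃ d ∈ {d : Fin n → Fin n → ℝ | ∀ i j, dm i j ≤ d i j ∧ d i j ≤ dp i j},
        {x : Fin n → ℝ | ∀ i : Fin n,
          -(∑ j ∈ G.neighborFinset i, d i j) / ((G.neighborFinset i).card : ℝ) - ξ ≤
            (∑ j ∈ G.neighborFinset i, x j) / ((G.neighborFinset i).card : ℝ) - x i ∧
          (∑ j ∈ G.neighborFinset i, x j) / ((G.neighborFinset i).card : ℝ) - x i ≤
            -(∑ j ∈ G.neighborFinset i, d i j) / ((G.neighborFinset i).card : ℝ) + ξ})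
      = {x : Fin n → ℝ | ∀ i : Fin n,
          -(∑ j ∈ G.neighborFinset i, dp i j) / ((G.neighborFinset i).card : ℝ) - ξ ≤
            (∑ j ∈ G.neighborFinset i, x j) / ((G.neighborFinset i).card : ℝ) - x i ∧
          (∑ j ∈ G.neighborFinset i, x j) / ((G.neighborFinset i).card : ℝ) - x i ≤
            -(∑ j ∈ G.neighborFinset i, dm i j) / ((G.neighborFinset i).card : ℝ) + ξ} := by
  have hbox : {d : Fin n → Fin n → ℝ | ∀ i j, dm i j ≤ d i j ∧ d i j ≤ dp i j} = Icc dm dp := by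
    ext d
    simp only [mem_ofPred_eq, mem_Icc, Pi.le_def, forall_and]
  ext x
  let u (i : Fin n) (r : Fin n → ℝ) : ℝ :=
    -(∑ j ∈ G.neighborFinset i, r j) / ((G.neighborFinset i).card : ℝ)
  let y (i : Fin n) : ℝ := (∑ j ∈ G.neighborFinset i, x j) / ((G.neighborFinset i).card : ℝ) - x i
  have hu (i : Fin n) : Antitone (u i) :=
    antitone_neg_sum_div _ (by exact_mod_cast (hN i).card_pos)
  have hrow (i : Fin n) : u i '' Icc (dm i) (dp i) = Icc (u i (dp i)) (u i (dm i)) :=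
    (hu i).image_Icc_pi (by fun_prop) (hle i)
  simp only [hbox, mem_iUnion₂, mem_ofPred_eq, exists_prop]
  refine (exists_mem_Icc_forall_apply_iff
    (P := fun i r => u i r - ξ ≤ y i ∧ y i ≤ u i r + ξ)).trans (forall_congr' fun i => ?_)
  rw [← exists_mem_image (f := u i) (p := fun v => v - ξ ≤ y i ∧ y i ≤ v + ξ), hrow i,
    exists_mem_Icc_sub_le_le_add_iff (hu i (hle i)) hξ.le]

/-- the union of the polyhedra P(d,E) over a box Q = [d⁻,d⁺] ⊆ D equals
the explicit polyhedron with bounds given by d⁺ and d⁻. -/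
theorem union_P_over_box
    (n : ℕ) (G : SimpleGraph (Fin n)) [DecidableRel G.Adj]
    (hconn : G.Connected) (hN : ∀ i, (G.neighborFinset i).Nonempty)
    (ξ : ℝ) (hξ : 0 < ξ) (dm dp : Fin n → Fin n → ℝ)
    (hdm : ∀ i j, -ξ ≤ dm i j ∧ dm i j ≤ ξ)
    (hdp : ∀ i j, -ξ ≤ dp i j ∧ dp i j ≤ ξ)
    (hle : ∀ i j, dm i j ≤ dp i j) :
    (⋃ d ∈ {d : Fin n → Fin n → ℝ | ∀ i j, dm i j ≤ d i j ∧ d i j ≤ dp i j},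
        {x : Fin n → ℝ | ∀ i : Fin n,
          -(∑ j ∈ G.neighborFinset i, d i j) / ((G.neighborFinset i).card : ℝ) - ξ ≤
            (∑ j ∈ G.neighborFinset i, x j) / ((G.neighborFinset i).card : ℝ) - x i ∧
          (∑ j ∈ G.neighborFinset i, x j) / ((G.neighborFinset i).card : ℝ) - x i ≤
            -(∑ j ∈ G.neighborFinset i, d i j) / ((G.neighborFinset i).card : ℝ) + ξ})
      = {x : Fin n → ℝ | ∀ i : Fin n,
          -(∑ j ∈ G.neighborFinset i, dp i j) / ((G.neighborFinset i).card : ℝ) - ξ ≤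
            (∑ j ∈ G.neighborFinset i, x j) / ((G.neighborFinset i).card : ℝ) - x i ∧
          (∑ j ∈ G.neighborFinset i, x j) / ((G.neighborFinset i).card : ℝ) - x i ≤
            -(∑ j ∈ G.neighborFinset i, dm i j) / ((G.neighborFinset i).card : ℝ) + ξ} :=
  union_P_over_box_general n G hN ξ hξ dm dp hle
end

section
/- The intersection over all disturbance vectors d ∈ D = [-ξ,ξ]^{Γ²} of the polyhedra P(d,E) equals the set of constant vectors {π·𝟏 : π ∈ ℝ}. -/
open Finset Matrix
open scoped BigOperators

theorem SimpleGraph.exists_eq_const_of_forall_expect_neighborFinset_eq {V : Type*} [Fintype V]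
    [DecidableEq V] {G : SimpleGraph V} [DecidableRel G.Adj] (hG : G.Connected) {x : V → ℝ}
    (hx : ∀ i, 𝔼 j ∈ G.neighborFinset i, x j = x i) : ∃ c : ℝ, x = fun _ => c := by
  have hL : G.lapMatrix ℝ *ᵥ x = 0 := funext fun i => by
    rw [lapMatrix_mulVec_apply, ← card_neighborFinset_eq_degree, ← card_mul_expect, hx i,
      Pi.zero_apply, sub_self]
  obtain ⟨v⟩ := hG.nonempty
  exact ⟨x v, funext fun i => (lapMatrix_mulVec_eq_zero_iff_forall_reachable G).1 hL i v (hG i v)⟩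

theorem inter_P_over_D_eq_constants_general
    (n : ℕ) (G : SimpleGraph (Fin n)) [DecidableRel G.Adj]
    (hconn : G.Connected) (hN : ∀ i, (G.neighborFinset i).Nonempty)
    (ξ : ℝ) (hξ : 0 < ξ) :
    (⋂ d ∈ {d : Fin n → Fin n → ℝ | ∀ i j, -ξ ≤ d i j ∧ d i j ≤ ξ},
        {x : Fin n → ℝ | ∀ i : Fin n,
          -(∑ j ∈ G.neighborFinset i, d i j) / ((G.neighborFinset i).card : ℝ) - ξ ≤
            (∑ j ∈ G.neighborFinset i, x j) / ((G.neighborFinset i).card : ℝ) - x i ∧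
          (∑ j ∈ G.neighborFinset i, x j) / ((G.neighborFinset i).card : ℝ) - x i ≤
            -(∑ j ∈ G.neighborFinset i, d i j) / ((G.neighborFinset i).card : ℝ) + ξ})
      = {x : Fin n → ℝ | ∃ π : ℝ, x = fun _ => π} := by
  ext x
  simp only [Set.mem_iInter, Set.mem_ofPred_eq, neg_div, ← expect_eq_sum_div_card]
  constructor
  · intro hx
    -- The constant disturbances `ξ` and `-ξ` pin every neighbourhood average of `x` to `x i`.
    refine SimpleGraph.exists_eq_const_of_forall_expect_neighborFinset_eq hconn fun i => ?_
    have hupper := (hx (fun _ _ => ξ) (fun _ _ => ⟨by linarith, le_rfl⟩) i).2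
    have hlower := (hx (fun _ _ => -ξ) (fun _ _ => ⟨le_rfl, by linarith⟩) i).1
    rw [expect_const (hN i)] at hupper hlower
    linarith
  · rintro ⟨π, rfl⟩ d hd i
    have hd_le := expect_le (hN i) fun j _ => (hd i j).2
    have le_hd := le_expect (hN i) fun j _ => (hd i j).1
    rw [expect_const (hN i)]
    constructor <;> linarith

/-- the intersection of P(d,E) over all d ∈ D = [-ξ,ξ]^{Γ²} equals the
set of constant vectors. -/
theorem inter_P_over_D_eq_constants
    (n : ℕ) (hn : 2 ≤ n) (G : SimpleGraph (Fin n)) [DecidableRel G.Adj]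
    (hconn : G.Connected) (hN : ∀ i, (G.neighborFinset i).Nonempty)
    (ξ : ℝ) (hξ : 0 < ξ) :
    (⋂ d ∈ {d : Fin n → Fin n → ℝ | ∀ i j, -ξ ≤ d i j ∧ d i j ≤ ξ},
        {x : Fin n → ℝ | ∀ i : Fin n,
          -(∑ j ∈ G.neighborFinset i, d i j) / ((G.neighborFinset i).card : ℝ) - ξ ≤
            (∑ j ∈ G.neighborFinset i, x j) / ((G.neighborFinset i).card : ℝ) - x i ∧
          (∑ j ∈ G.neighborFinset i, x j) / ((G.neighborFinset i).card : ℝ) - x i ≤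
            -(∑ j ∈ G.neighborFinset i, d i j) / ((G.neighborFinset i).card : ℝ) + ξ})
      = {x : Fin n → ℝ | ∃ π : ℝ, x = fun _ => π} :=
  inter_P_over_D_eq_constants_general n G hconn hN ξ hξ
end

section
/- Fix Q₁ = {d : -ξ ≤ d ≤ -d̂} and Q₂ = {d : d̂ ≤ d ≤ ξ} with 0 < d̂ ≤ ξ. Then P(Q₁,E) ∩ P(Q₂,E) = {x ∈ ℝ^n : |(Σ_{j∈N_i} x_j)/|N_i| - x_i| ≤ ξ - d̂ for all i ∈ Γ}, where P(Q,E) = ⋃_{d∈Q} P(d,E). In particular, if d̂ = ξ then P(Q₁,E) ∩ P(Q₂,E) = {π·𝟏 : π ∈ ℝ}. -/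
/-!
The neighbourhood mean of an offset row with entries in `[lo, hi]` takes every value of
`[lo, hi]`, so `P(Q, E)` is cut out by the bounds `-hi - ξ ≤ 𝔼 x - x_i ≤ -lo + ξ` on the mean
deviation of `x`; for `Q₁ ∩ Q₂` these leave exactly `|𝔼 x - x_i| ≤ ξ - d̂`. When `d̂ = ξ`, `x`
has the mean value property, i.e. lies in the kernel of the graph Laplacian, which on a connected
graph consists of the constants.
-/

open Finset Matrix
open scoped BigOperators

namespace SimpleGraph

variable {V : Type*} [Fintype V] (G : SimpleGraph V) [DecidableRel G.Adj]

/-- The polyhedron `P(d, E)`. -/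
def neighborMeanPolyhedron (ξ : ℝ) (d : V → V → ℝ) : Set (V → ℝ) :=
  {x | ∀ i, -(𝔼 j ∈ G.neighborFinset i, d i j) - ξ ≤ 𝔼 j ∈ G.neighborFinset i, x j - x i ∧
    𝔼 j ∈ G.neighborFinset i, x j - x i ≤ -(𝔼 j ∈ G.neighborFinset i, d i j) + ξ}

theorem biUnion_neighborMeanPolyhedron_box (hN : ∀ i, (G.neighborFinset i).Nonempty)
    {ξ lo hi : ℝ} (hξ : 0 ≤ ξ) (hlohi : lo ≤ hi) :
    ⋃ d ∈ {d : V → V → ℝ | ∀ i j, lo ≤ d i j ∧ d i j ≤ hi}, G.neighborMeanPolyhedron ξ d =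
      {x | ∀ i, -hi - ξ ≤ 𝔼 j ∈ G.neighborFinset i, x j - x i ∧
        𝔼 j ∈ G.neighborFinset i, x j - x i ≤ -lo + ξ} := by
  ext x
  simp only [Set.mem_iUnion, Set.mem_ofPred_eq, neighborMeanPolyhedron, exists_prop]
  constructor
  · rintro ⟨d, hd, hx⟩ i
    have hlo : lo ≤ 𝔼 j ∈ G.neighborFinset i, d i j := le_expect (hN i) fun j _ ↦ (hd i j).1
    have hhi : 𝔼 j ∈ G.neighborFinset i, d i j ≤ hi := expect_le (hN i) fun j _ ↦ (hd i j).2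
    exact ⟨by linarith [(hx i).1], by linarith [(hx i).2]⟩
  · intro hx
    -- Row `i` of `d` is constant, equal to the least value in `[lo, hi]` that is admissible at `i`.
    set c : V → ℝ := fun i ↦ max lo (-(𝔼 j ∈ G.neighborFinset i, x j - x i) - ξ)
    refine ⟨fun i _ ↦ c i, fun i _ ↦ ⟨le_max_left _ _, max_le hlohi ?_⟩, fun i ↦ ?_⟩
    · linarith [(hx i).1]
    · have hc : c i ≤ -(𝔼 j ∈ G.neighborFinset i, x j - x i) + ξ :=
        max_le (by linarith [(hx i).2]) (by linarith)
      simp only [expect_const (hN i)]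
      exact ⟨by linarith [le_max_right lo (-(𝔼 j ∈ G.neighborFinset i, x j - x i) - ξ)],
        by linarith⟩

theorem lapMatrix_mulVec_apply_eq_degree_mul [DecidableEq V] (x : V → ℝ) (i : V) :
    (G.lapMatrix ℝ *ᵥ x) i = G.degree i * (x i - 𝔼 j ∈ G.neighborFinset i, x j) := by
  rw [lapMatrix_mulVec_apply, mul_sub, ← card_smul_expect, nsmul_eq_mul,
    card_neighborFinset_eq_degree]

theorem exists_eq_const_of_forall_expect_neighborFinset_eq_s6 (hG : G.Connected) {x : V → ℝ}
    (hx : ∀ i, 𝔼 j ∈ G.neighborFinset i, x j = x i) : ∃ π : ℝ, x = fun _ ↦ π := by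
  classical
  have hker : G.lapMatrix ℝ *ᵥ x = 0 := funext fun i ↦ by
    rw [lapMatrix_mulVec_apply_eq_degree_mul, hx i, sub_self, mul_zero, Pi.zero_apply]
  obtain ⟨i₀⟩ := hG.nonempty
  exact ⟨x i₀, funext fun i ↦
    ((lapMatrix_mulVec_eq_zero_iff_forall_reachable G).1 hker i₀ i (hG i₀ i)).symm⟩

theorem forall_expect_neighborFinset_eq_iff (hG : G.Connected)
    (hN : ∀ i, (G.neighborFinset i).Nonempty) {x : V → ℝ} :
    (∀ i, 𝔼 j ∈ G.neighborFinset i, x j = x i) ↔ ∃ π : ℝ, x = fun _ ↦ π := by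
  refine ⟨G.exists_eq_const_of_forall_expect_neighborFinset_eq_s6 hG, ?_⟩
  rintro ⟨π, rfl⟩ i
  exact expect_const (hN i) π

end SimpleGraph

theorem inter_P_Q1_Q2_general
    (n : ℕ) (G : SimpleGraph (Fin n)) [DecidableRel G.Adj]
    (hconn : G.Connected) (hN : ∀ i, (G.neighborFinset i).Nonempty)
    (ξ dhat : ℝ) (hdhat : 0 < dhat) (hdhatle : dhat ≤ ξ) :
    ((⋃ d ∈ {d : Fin n → Fin n → ℝ | ∀ i j, -ξ ≤ d i j ∧ d i j ≤ -dhat},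
        {x : Fin n → ℝ | ∀ i : Fin n,
          -(∑ j ∈ G.neighborFinset i, d i j) / ((G.neighborFinset i).card : ℝ) - ξ ≤
            (∑ j ∈ G.neighborFinset i, x j) / ((G.neighborFinset i).card : ℝ) - x i ∧
          (∑ j ∈ G.neighborFinset i, x j) / ((G.neighborFinset i).card : ℝ) - x i ≤
            -(∑ j ∈ G.neighborFinset i, d i j) / ((G.neighborFinset i).card : ℝ) + ξ}) ∩
     (⋃ d ∈ {d : Fin n → Fin n → ℝ | ∀ i j, dhat ≤ d i j ∧ d i j ≤ ξ},
        {x : Fin n → ℝ | ∀ i : Fin n,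
          -(∑ j ∈ G.neighborFinset i, d i j) / ((G.neighborFinset i).card : ℝ) - ξ ≤
            (∑ j ∈ G.neighborFinset i, x j) / ((G.neighborFinset i).card : ℝ) - x i ∧
          (∑ j ∈ G.neighborFinset i, x j) / ((G.neighborFinset i).card : ℝ) - x i ≤
            -(∑ j ∈ G.neighborFinset i, d i j) / ((G.neighborFinset i).card : ℝ) + ξ}))
      = {x : Fin n → ℝ | ∀ i : Fin n,
          |(∑ j ∈ G.neighborFinset i, x j) / ((G.neighborFinset i).card : ℝ) - x i| ≤ ξ - dhat}
    ∧ (dhat = ξ →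
        {x : Fin n → ℝ | ∀ i : Fin n,
          |(∑ j ∈ G.neighborFinset i, x j) / ((G.neighborFinset i).card : ℝ) - x i| ≤ ξ - dhat}
          = {x : Fin n → ℝ | ∃ π : ℝ, x = fun _ => π}) := by
  have hξ : 0 ≤ ξ := by linarith
  have hQ₁ := G.biUnion_neighborMeanPolyhedron_box hN hξ (neg_le_neg hdhatle)
  have hQ₂ := G.biUnion_neighborMeanPolyhedron_box hN hξ hdhatle
  simp only [SimpleGraph.neighborMeanPolyhedron] at hQ₁ hQ₂
  simp only [neg_div, ← expect_eq_sum_div_card]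
  refine ⟨?_, fun h ↦ ?_⟩
  · rw [hQ₁, hQ₂]
    ext x
    simp only [Set.mem_inter_iff, Set.mem_ofPred_eq, ← forall_and, abs_le]
    refine forall_congr' fun i ↦ ⟨fun h ↦ ⟨by linarith, by linarith⟩, fun h ↦ ?_⟩
    exact ⟨⟨by linarith, by linarith⟩, by linarith, by linarith⟩
  · ext x
    simp only [h, sub_self, abs_nonpos_iff, sub_eq_zero, Set.mem_ofPred_eq]
    exact G.forall_expect_neighborFinset_eq_iff hconn hN

/-- with Q₁ = [-ξ,-d̂] and Q₂ = [d̂,ξ] (0 < d̂ ≤ ξ),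
P(Q₁,E) ∩ P(Q₂,E) = {x : |avg - x_i| ≤ ξ - d̂ for all i}; in particular for
d̂ = ξ this intersection is exactly the set of constant vectors. -/
theorem inter_P_Q1_Q2
    (n : ℕ) (hn : 2 ≤ n) (G : SimpleGraph (Fin n)) [DecidableRel G.Adj]
    (hconn : G.Connected) (hN : ∀ i, (G.neighborFinset i).Nonempty)
    (ξ dhat : ℝ) (hξ : 0 < ξ) (hdhat : 0 < dhat) (hdhatle : dhat ≤ ξ) :
    ((⋃ d ∈ {d : Fin n → Fin n → ℝ | ∀ i j, -ξ ≤ d i j ∧ d i j ≤ -dhat},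
        {x : Fin n → ℝ | ∀ i : Fin n,
          -(∑ j ∈ G.neighborFinset i, d i j) / ((G.neighborFinset i).card : ℝ) - ξ ≤
            (∑ j ∈ G.neighborFinset i, x j) / ((G.neighborFinset i).card : ℝ) - x i ∧
          (∑ j ∈ G.neighborFinset i, x j) / ((G.neighborFinset i).card : ℝ) - x i ≤
            -(∑ j ∈ G.neighborFinset i, d i j) / ((G.neighborFinset i).card : ℝ) + ξ}) ∩
     (⋃ d ∈ {d : Fin n → Fin n → ℝ | ∀ i j, dhat ≤ d i j ∧ d i j ≤ ξ},
        {x : Fin n → ℝ | ∀ i : Fin n,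
          -(∑ j ∈ G.neighborFinset i, d i j) / ((G.neighborFinset i).card : ℝ) - ξ ≤
            (∑ j ∈ G.neighborFinset i, x j) / ((G.neighborFinset i).card : ℝ) - x i ∧
          (∑ j ∈ G.neighborFinset i, x j) / ((G.neighborFinset i).card : ℝ) - x i ≤
            -(∑ j ∈ G.neighborFinset i, d i j) / ((G.neighborFinset i).card : ℝ) + ξ}))
      = {x : Fin n → ℝ | ∀ i : Fin n,
          |(∑ j ∈ G.neighborFinset i, x j) / ((G.neighborFinset i).card : ℝ) - x i| ≤ ξ - dhat}
    ∧ (dhat = ξ →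
        {x : Fin n → ℝ | ∀ i : Fin n,
          |(∑ j ∈ G.neighborFinset i, x j) / ((G.neighborFinset i).card : ℝ) - x i| ≤ ξ - dhat}
          = {x : Fin n → ℝ | ∃ π : ℝ, x = fun _ => π}) :=
  inter_P_Q1_Q2_general n G hconn hN ξ dhat hdhat hdhatle
end

section
/- Consider the chain graph on n agents with edges E = {(i,i+1) : i = 1,…,n-1} (made undirected). The point x with x_{i+1} = x_i + ξ for all i (i.e., x_i = x_1 + (i-1)ξ) belongs to P(0,E), the equilibrium polyhedron for the zero disturbance. Consequently, for this equilibrium the maximum pairwise state difference equals (n-1)ξ, so ε-consensus with ε < (n-1)ξ/2 cannot be guaranteed. -/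
/-! Every neighbour of `i` on the chain differs from `x i` by exactly `ξ`, and a mean of values
lying in `[x i - ξ, x i + ξ]` lies there too. -/

open Finset

lemma abs_sum_div_card_sub_le {ι K : Type*} [Field K] [LinearOrder K] [IsStrictOrderedRing K]
    {s : Finset ι} (hs : s.Nonempty) {f : ι → K} {a ξ : K} (h : ∀ j ∈ s, |f j - a| ≤ ξ) :
    |(∑ j ∈ s, f j) / s.card - a| ≤ ξ := by
  rw [← expect_eq_sum_div_card, abs_sub_le_iff, sub_le_iff_le_add, sub_le_comm]
  constructor
  · exact expect_le hs fun j hj => by linarith [(abs_sub_le_iff.1 (h j hj)).1]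
  · exact le_expect hs fun j hj => by linarith [(abs_sub_le_iff.1 (h j hj)).2]

def chainNeighbors (n : ℕ) (i : Fin n) : Finset (Fin n) :=
  univ.filter fun j : Fin n => (j : ℕ) = (i : ℕ) + 1 ∨ (j : ℕ) + 1 = (i : ℕ)

lemma chainNeighbors_nonempty {n : ℕ} (hn : 2 ≤ n) (i : Fin n) :
    (chainNeighbors n i).Nonempty := by
  by_cases hi : (i : ℕ) + 1 < n
  · exact ⟨⟨i + 1, hi⟩, by simp [chainNeighbors]⟩
  · refine ⟨⟨i - 1, by omega⟩, ?_⟩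
    simp only [chainNeighbors, mem_filter, mem_univ, true_and]
    omega

lemma abs_sub_eq_one_of_mem_chainNeighbors {n : ℕ} {i j : Fin n} (h : j ∈ chainNeighbors n i) :
    |((j : ℕ) : ℝ) - (i : ℕ)| = 1 := by
  simp only [chainNeighbors, mem_filter, mem_univ, true_and] at h
  rcases h with h | h <;> [rw [h]; rw [← h]] <;> push_cast <;> norm_num

/-- on the chain graph, the staircase point x_i = x_1 + (i-1)ξ belongs to
P(0,E) (zero disturbance), and its spread equals (n-1)ξ. -/
theorem chain_staircase_equilibrium
    (n : ℕ) (hn : 2 ≤ n) (ξ : ℝ) (hξ : 0 < ξ) (c : ℝ) :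
    let N : Fin n → Finset (Fin n) :=
      fun i => Finset.univ.filter (fun j : Fin n => (j : ℕ) = (i : ℕ) + 1 ∨ (j : ℕ) + 1 = (i : ℕ))
    let x : Fin n → ℝ := fun i => c + (i : ℕ) * ξ
    (∀ i : Fin n, |(∑ j ∈ N i, x j) / ((N i).card : ℝ) - x i| ≤ ξ) ∧
    x ⟨n - 1, by omega⟩ - x ⟨0, by omega⟩ = ((n : ℝ) - 1) * ξ := by
  intro N x
  refine ⟨fun i => abs_sum_div_card_sub_le (chainNeighbors_nonempty hn i) fun j hj => ?_, ?_⟩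
  · have hstep : x j - x i = (((j : ℕ) : ℝ) - (i : ℕ)) * ξ := by ring
    rw [hstep, abs_mul, abs_sub_eq_one_of_mem_chainNeighbors hj, abs_of_pos hξ, one_mul]
  · simp only [x, Nat.cast_pred (by omega : 0 < n)]
    ring
end

section
/- (Sign-preservation of the lazy rule) Fix agent i with neighborhood N_i, state x_i ∈ ℝ, measurements y_{ij} = x_j + d_{ij} with |d_{ij}| ≤ ξ, and let u_i = Σ_{j∈N_i}(ỹ_{ij} - x_i) where ỹ = argmin over ỹ_{ij} ∈ [y_{ij}-ξ, y_{ij}+ξ] of |Σ_{j∈N_i}(ỹ_{ij} - x_i)|. Then either u_i = 0, or sign(u_i) = sign(Σ_{j∈N_i}(x_j - x_i)). In particular, if Σ_{j∈N_i}(ỹ_{ij}-x_i) > 0 for all admissible ỹ, then Σ_{j∈N_i}(x_j - x_i) > 0. -/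
/-!
The feasible estimates form a box, which is convex and contains the true states `x`, and the
control is an affine function of the estimates, so its feasible values form an interval
containing both `u_i` and `Σ (x_j - x_i)`. If these had weakly opposite signs, the interval would
contain `0`, and a minimizer of `|u_i|` would give `u_i = 0`.
-/

open Set

theorem Set.OrdConnected.mul_pos_of_isMinOn_abs {s : Set ℝ} (hs : s.OrdConnected) {a b : ℝ}
    (ha : a ∈ s) (hb : b ∈ s) (hmin : IsMinOn (fun c => |c|) s a) (ha₀ : a ≠ 0) :
    0 < a * b := by
  by_contra! hab
  have hzero : (0 : ℝ) ∈ s := hs.uIcc_subset ha hb <| by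
    rw [mem_uIcc]
    rcases mul_nonpos_iff.mp hab with h | h
    · exact Or.inr ⟨h.2, h.1⟩
    · exact Or.inl h
  have : |a| ≤ |0| := isMinOn_iff.mp hmin 0 hzero
  exact ha₀ (abs_nonpos_iff.mp (by simpa using this))

theorem Convex.mul_pos_of_isMinOn_abs_comp {E : Type*} [AddCommGroup E] [Module ℝ E]
    {s : Set E} (hs : Convex ℝ s) (f : E →ᵃ[ℝ] ℝ) {a b : E} (ha : a ∈ s) (hb : b ∈ s)
    (hmin : IsMinOn (fun z => |f z|) s a) (hfa : f a ≠ 0) :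
    0 < f a * f b := by
  refine (hs.affine_image f).ordConnected.mul_pos_of_isMinOn_abs (mem_image_of_mem f ha)
    (mem_image_of_mem f hb) ?_ hfa
  exact isMinOn_iff.mpr <| forall_mem_image.mpr fun z hz => isMinOn_iff.mp hmin z hz

def neighborControl {ι : Type*} (N : Finset ι) (xi : ℝ) : (ι → ℝ) →ᵃ[ℝ] ℝ where
  toFun z := ∑ j ∈ N, (z j - xi)
  linear := ∑ j ∈ N, LinearMap.proj j
  map_vadd' v z := by
    simp [LinearMap.sum_apply, Finset.sum_add_distrib, add_sub_assoc]

@[simp]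
theorem neighborControl_apply {ι : Type*} (N : Finset ι) (xi : ℝ) (z : ι → ℝ) :
    neighborControl N xi z = ∑ j ∈ N, (z j - xi) :=
  rfl

theorem lazy_rule_sign_preservation_general
    {ι : Type*} (N : Finset ι)
    (ξ : ℝ) (xi : ℝ) (x d : ι → ℝ)
    (hd : ∀ j ∈ N, -ξ ≤ d j ∧ d j ≤ ξ)
    (y : ι → ℝ) (hy : ∀ j ∈ N, y j = x j + d j)
    (ytil : ι → ℝ)
    (hfeas : ∀ j ∈ N, y j - ξ ≤ ytil j ∧ ytil j ≤ y j + ξ)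
    (hmin : ∀ z : ι → ℝ, (∀ j ∈ N, y j - ξ ≤ z j ∧ z j ≤ y j + ξ) →
      |∑ j ∈ N, (ytil j - xi)| ≤ |∑ j ∈ N, (z j - xi)|) :
    ((∑ j ∈ N, (ytil j - xi) = 0) ∨
      (0 < ∑ j ∈ N, (ytil j - xi) ∧ 0 < ∑ j ∈ N, (x j - xi)) ∨
      ((∑ j ∈ N, (ytil j - xi)) < 0 ∧ (∑ j ∈ N, (x j - xi)) < 0)) ∧
    ((∀ z : ι → ℝ, (∀ j ∈ N, y j - ξ ≤ z j ∧ z j ≤ y j + ξ) →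
        0 < ∑ j ∈ N, (z j - xi)) → 0 < ∑ j ∈ N, (x j - xi)) := by
  set box : Set (ι → ℝ) := (N : Set ι).pi fun j => Icc (y j - ξ) (y j + ξ)
  have hx : x ∈ box := fun j hj => by
    obtain ⟨hd₁, hd₂⟩ := hd j hj
    simp only [mem_Icc, hy j hj]
    constructor <;> linarith
  have hsign : ∑ j ∈ N, (ytil j - xi) ≠ 0 →
      0 < (∑ j ∈ N, (ytil j - xi)) * ∑ j ∈ N, (x j - xi) := by
    simpa using (convex_pi fun j _ => convex_Icc _ _).mul_pos_of_isMinOn_abs_comp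
      (neighborControl N xi) (s := box) (a := ytil) hfeas hx
      (isMinOn_iff.mpr fun z hz => by simpa using hmin z hz)
  refine ⟨?_, fun hall => pos_of_mul_pos_right (hsign (hall ytil hfeas).ne') (hall ytil hfeas).le⟩
  rcases lt_trichotomy (∑ j ∈ N, (ytil j - xi)) 0 with hneg | hzero | hpos
  · exact Or.inr <| Or.inr ⟨hneg, neg_of_mul_pos_right (hsign hneg.ne) hneg.le⟩
  · exact Or.inl hzero
  · exact Or.inr <| Or.inl ⟨hpos, pos_of_mul_pos_right (hsign hpos.ne') hpos.le⟩

/-- sign preservation of the lazy rule. If ỹ is a feasible minimizer of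
|Σ_{j∈N}(ỹ_j - x_i)|, then either the control is zero or its sign agrees with the
sign of Σ_{j∈N}(x_j - x_i); in particular if every feasible choice yields a strictly
positive control then Σ_{j∈N}(x_j - x_i) > 0. -/
theorem lazy_rule_sign_preservation
    {ι : Type*} [DecidableEq ι] (N : Finset ι) (hNne : N.Nonempty)
    (ξ : ℝ) (hξ : 0 < ξ) (xi : ℝ) (x d : ι → ℝ)
    (hd : ∀ j ∈ N, -ξ ≤ d j ∧ d j ≤ ξ)
    (y : ι → ℝ) (hy : ∀ j ∈ N, y j = x j + d j)
    (ytil : ι → ℝ)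
    (hfeas : ∀ j ∈ N, y j - ξ ≤ ytil j ∧ ytil j ≤ y j + ξ)
    (hmin : ∀ z : ι → ℝ, (∀ j ∈ N, y j - ξ ≤ z j ∧ z j ≤ y j + ξ) →
      |∑ j ∈ N, (ytil j - xi)| ≤ |∑ j ∈ N, (z j - xi)|) :
    ((∑ j ∈ N, (ytil j - xi) = 0) ∨
      (0 < ∑ j ∈ N, (ytil j - xi) ∧ 0 < ∑ j ∈ N, (x j - xi)) ∨
      ((∑ j ∈ N, (ytil j - xi)) < 0 ∧ (∑ j ∈ N, (x j - xi)) < 0)) ∧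
    ((∀ z : ι → ℝ, (∀ j ∈ N, y j - ξ ≤ z j ∧ z j ≤ y j + ξ) →
        0 < ∑ j ∈ N, (z j - xi)) → 0 < ∑ j ∈ N, (x j - xi)) :=
  lazy_rule_sign_preservation_general N ξ xi x d hd y hy ytil hfeas hmin
end

section
/- A point x ∈ ℝ^n satisfies u_i(x) = 0 for all i (where u_i is the lazy-rule control for constant disturbance d) if and only if x ∈ P(d,E). That is, min over ỹ_{ij} ∈ [x_j + d_{ij} - ξ, x_j + d_{ij} + ξ] of |Σ_{j∈N_i}(ỹ_{ij}-x_i)| equals 0 for all i if and only if -(Σ_{j∈N_i} d_{ij})/|N_i| - ξ ≤ (Σ_{j∈N_i} x_j)/|N_i| - x_i ≤ -(Σ_{j∈N_i} d_{ij})/|N_i| + ξ for all i. -/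
open Finset

variable {ι K : Type*} [Field K] [LinearOrder K] [IsStrictOrderedRing K]

/-- Shifting every centre `a j` by the common amount `(b - ∑ a) / #s` realizes every admissible
total, so only the sum of the box constraints matters. -/
theorem exists_sum_eq_of_forall_near_iff (s : Finset ι) (a : ι → K) (r b : K) :
    (∃ y : ι → K, (∀ j ∈ s, a j - r ≤ y j ∧ y j ≤ a j + r) ∧ ∑ j ∈ s, y j = b) ↔
      ∑ j ∈ s, a j - #s * r ≤ b ∧ b ≤ ∑ j ∈ s, a j + #s * r := by
  constructor
  · rintro ⟨y, hy, rfl⟩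
    have lower := sum_le_sum fun j hj => (hy j hj).1
    have upper := sum_le_sum fun j hj => (hy j hj).2
    simp only [sum_sub_distrib, sum_add_distrib, sum_const, nsmul_eq_mul] at lower upper
    exact ⟨lower, upper⟩
  · rintro ⟨lower, upper⟩
    rcases s.eq_empty_or_nonempty with rfl | hs
    · exact ⟨0, by simp, by simp_all [le_antisymm_iff]⟩
    have hc : (0 : K) < #s := by exact_mod_cast hs.card_pos
    set t := (b - ∑ j ∈ s, a j) / #s
    have ht : -r ≤ t ∧ t ≤ r := by
      constructor
      · rw [le_div_iff₀ hc]; linarith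
      · rw [div_le_iff₀ hc]; linarith
    refine ⟨fun j => a j + t, fun j _ => ⟨by linarith, by linarith⟩, ?_⟩
    simp only [t, sum_add_distrib, sum_const, nsmul_eq_mul]
    field_simp
    ring

theorem sum_sub_le_mul_iff_div_sub_le {c : K} (hc : 0 < c) (X D x r : K) :
    (X + D - c * r ≤ c * x ∧ c * x ≤ X + D + c * r) ↔
      (-D / c - r ≤ X / c - x ∧ X / c - x ≤ -D / c + r) := by
  have hX : X / c - x = (X - c * x) / c := by field_simp
  have hlo : -D / c - r = (-D - c * r) / c := by field_simp
  have hhi : -D / c + r = (-D + c * r) / c := by field_simp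
  rw [hX, hlo, hhi, div_le_div_iff_of_pos_right hc, div_le_div_iff_of_pos_right hc]
  constructor <;> rintro ⟨h₁, h₂⟩ <;> constructor <;> linarith

theorem lazy_control_zero_iff_mem_P_general
    (n : ℕ) (G : SimpleGraph (Fin n)) [DecidableRel G.Adj]
    (hN : ∀ i, (G.neighborFinset i).Nonempty)
    (ξ : ℝ) (d : Fin n → Fin n → ℝ)
    (x : Fin n → ℝ) :
    (∀ i : Fin n, ∃ ytil : Fin n → ℝ,
        (∀ j ∈ G.neighborFinset i,
          x j + d i j - ξ ≤ ytil j ∧ ytil j ≤ x j + d i j + ξ) ∧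
        ∑ j ∈ G.neighborFinset i, (ytil j - x i) = 0)
    ↔ (∀ i : Fin n,
        -(∑ j ∈ G.neighborFinset i, d i j) / ((G.neighborFinset i).card : ℝ) - ξ ≤
          (∑ j ∈ G.neighborFinset i, x j) / ((G.neighborFinset i).card : ℝ) - x i ∧
        (∑ j ∈ G.neighborFinset i, x j) / ((G.neighborFinset i).card : ℝ) - x i ≤
          -(∑ j ∈ G.neighborFinset i, d i j) / ((G.neighborFinset i).card : ℝ) + ξ) := by
  refine forall_congr' fun i => ?_
  set N := G.neighborFinset i
  have hc : (0 : ℝ) < #N := by exact_mod_cast (hN i).card_pos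
  have balance : ∀ y : Fin n → ℝ, ∑ j ∈ N, (y j - x i) = 0 ↔ ∑ j ∈ N, y j = #N * x i := by
    intro y
    rw [sum_sub_distrib, sum_const, nsmul_eq_mul, sub_eq_zero]
  simp only [balance]
  rw [exists_sum_eq_of_forall_near_iff N (fun j => x j + d i j), sum_add_distrib,
    sum_sub_le_mul_iff_div_sub_le hc]

/-- the lazy-rule control vanishes at every agent (for constant
disturbance d) if and only if x belongs to the polyhedron P(d,E). -/
theorem lazy_control_zero_iff_mem_P
    (n : ℕ) (G : SimpleGraph (Fin n)) [DecidableRel G.Adj]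
    (hN : ∀ i, (G.neighborFinset i).Nonempty)
    (ξ : ℝ) (hξ : 0 < ξ) (d : Fin n → Fin n → ℝ)
    (hd : ∀ i j, -ξ ≤ d i j ∧ d i j ≤ ξ) (x : Fin n → ℝ) :
    (∀ i : Fin n, ∃ ytil : Fin n → ℝ,
        (∀ j ∈ G.neighborFinset i,
          x j + d i j - ξ ≤ ytil j ∧ ytil j ≤ x j + d i j + ξ) ∧
        ∑ j ∈ G.neighborFinset i, (ytil j - x i) = 0)
    ↔ (∀ i : Fin n,
        -(∑ j ∈ G.neighborFinset i, d i j) / ((G.neighborFinset i).card : ℝ) - ξ ≤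
          (∑ j ∈ G.neighborFinset i, x j) / ((G.neighborFinset i).card : ℝ) - x i ∧
        (∑ j ∈ G.neighborFinset i, x j) / ((G.neighborFinset i).card : ℝ) - x i ≤
          -(∑ j ∈ G.neighborFinset i, d i j) / ((G.neighborFinset i).card : ℝ) + ξ) :=
  lazy_control_zero_iff_mem_P_general n G hN ξ d x
end

section
/- (Upper bound β) For the two-agent comparison system with x_a(0) - x_b(0) > 2ξ, both x_a(t) and x_b(t) converge as t → ∞ to the value β = (x_a(0)+x_b(0))/2 + ξ + (ξ/2)·ln((x_a(0)-x_b(0)-ξ)/ξ), and β ≤ x_a(0). -/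
open Real Filter Set

/-- If a function has derivative zero at every point of `[a,b]`, it is constant there. -/
lemma const_of_deriv_zero_Icc {f : ℝ → ℝ} {a b : ℝ} (hab : a ≤ b)
    (h : ∀ t ∈ Set.Icc a b, HasDerivAt f 0 t) : f b = f a := by
  have hc : ContinuousOn f (Set.Icc a b) := fun t ht =>
    ((h t ht).continuousAt).continuousWithinAt
  exact constant_of_has_deriv_right_zero hc
    (fun t ht => (h t (Set.mem_Icc_of_Ico ht)).hasDerivWithinAt)
    b (Set.right_mem_Icc.mpr hab)

/-- for the two-agent comparison system with initial gap > 2ξ, both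
states converge to β = (x_a(0)+x_b(0))/2 + ξ + (ξ/2)·ln((x_a(0)-x_b(0)-ξ)/ξ), and β ≤ x_a(0). -/
theorem two_agent_upper_bound_beta
    (ξ : ℝ) (hξ : 0 < ξ) (xa xb : ℝ → ℝ)
    (hgap : xa 0 - xb 0 > 2 * ξ)
    (that : ℝ) (hthat : that = (1 / 2) * Real.log ((xa 0 - xb 0 - ξ) / ξ))
    (hode1 : ∀ t ∈ Set.Icc (0 : ℝ) that,
      HasDerivAt xa (xb t + 2 * ξ - xa t) t ∧ HasDerivAt xb (xa t - xb t) t)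
    (hode2 : ∀ t : ℝ, that ≤ t →
      HasDerivAt xa 0 t ∧ HasDerivAt xb (xa that - xb t) t)
    (β : ℝ)
    (hβ : β = (xa 0 + xb 0) / 2 + ξ + (ξ / 2) * Real.log ((xa 0 - xb 0 - ξ) / ξ)) :
    Filter.Tendsto xa Filter.atTop (nhds β) ∧
    Filter.Tendsto xb Filter.atTop (nhds β) ∧
    β ≤ xa 0 := by
  set s : ℝ := xa 0 - xb 0 - ξ with hs_def
  set L : ℝ := Real.log (s / ξ) with hL_def
  have hspos : 0 < s := by simp only [hs_def]; linarith
  have hsξ : ξ < s := by simp only [hs_def]; linarith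
  have hr1 : 1 < s / ξ := (one_lt_div hξ).mpr hsξ
  have hLpos : 0 < L := Real.log_pos hr1
  have hthat0 : 0 ≤ that := by rw [hthat]; positivity
  -- conserved quantity 1 : xa + xb - 2ξ t
  have hg : xa that + xb that - 2 * ξ * that = xa 0 + xb 0 := by
    have := const_of_deriv_zero_Icc (f := fun t => xa t + xb t - 2 * ξ * t) hthat0 ?_
    · simpa using this
    · intro t ht
      have h1 := (hode1 t ht).1
      have h2 := (hode1 t ht).2
      have h3 : HasDerivAt (fun u : ℝ => 2 * ξ * u) (2 * ξ) t := by
        simpa using (hasDerivAt_id t).const_mul (2 * ξ)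
      have := (h1.add h2).sub h3
      refine this.congr_deriv ?_
      ring
  -- conserved quantity 2 : exp(2t)(xa - xb - ξ)
  have hh : Real.exp (2 * that) * (xa that - xb that - ξ) = s := by
    have := const_of_deriv_zero_Icc
      (f := fun t => Real.exp (2 * t) * (xa t - xb t - ξ)) hthat0 ?_
    · simpa [hs_def] using this
    · intro t ht
      have h1 := (hode1 t ht).1
      have h2 := (hode1 t ht).2
      have he : HasDerivAt (fun u : ℝ => Real.exp (2 * u)) (Real.exp (2 * t) * 2) t := by
        simpa using (((hasDerivAt_id t).const_mul 2).exp)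
      have hd : HasDerivAt (fun u => xa u - xb u - ξ)
          ((xb t + 2 * ξ - xa t) - (xa t - xb t)) t := (h1.sub h2).sub_const ξ
      have := he.mul hd
      refine this.congr_deriv ?_
      ring
  have hexp : Real.exp (2 * that) = s / ξ := by
    rw [hthat, hL_def,
      show (2:ℝ) * (1 / 2 * Real.log (s / ξ)) = Real.log (s / ξ) by ring]
    exact Real.exp_log (by positivity)
  -- gap at that equals 2ξ
  have hgapthat : xa that - xb that = 2 * ξ := by
    rw [hexp] at hh
    have hξ0 : (ξ : ℝ) ≠ 0 := ne_of_gt hξ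
    have hs0 : (s : ℝ) ≠ 0 := ne_of_gt hspos
    field_simp at hh
    linarith
  have hξthat : ξ * that = (ξ / 2) * L := by rw [hthat]; ring
  have hxathat : xa that = β := by
    linarith [hβ]
  -- xa is constant equal to β for t ≥ that
  have hxa : ∀ t, that ≤ t → xa t = β := by
    intro t ht
    have : xa t = xa that :=
      const_of_deriv_zero_Icc ht (fun u hu => (hode2 u hu.1).1)
    rw [this, hxathat]
  -- explicit form of xb for t ≥ that
  have hxb : ∀ t, that ≤ t → xb t = β - 2 * ξ * Real.exp (that - t) := by
    intro t ht
    have hk : Real.exp t * (xb t - β) = Real.exp that * (xb that - β) := by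
      apply const_of_deriv_zero_Icc (f := fun u => Real.exp u * (xb u - β)) ht
      intro u hu
      have h2 := (hode2 u hu.1).2
      rw [hxathat] at h2
      have he : HasDerivAt (fun u : ℝ => Real.exp u) (Real.exp u) u := Real.hasDerivAt_exp u
      have := he.mul (h2.sub_const β)
      refine this.congr_deriv ?_
      ring
    have hxbthat : xb that = β - 2 * ξ := by
      have := hxathat; linarith [hgapthat]
    rw [hxbthat] at hk
    have hexpt : Real.exp t ≠ 0 := Real.exp_ne_zero t
    have : xb t - β = Real.exp that * (-(2 * ξ)) / Real.exp t := by
      field_simp at hk ⊢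
      linarith [hk]
    rw [Real.exp_sub]
    field_simp at this ⊢
    linarith [this]
  -- convergence of xa
  have hxa_tendsto : Filter.Tendsto xa Filter.atTop (nhds β) := by
    have : ∀ᶠ t in atTop, xa t = β := by
      filter_upwards [eventually_ge_atTop that] with t ht using hxa t ht
    exact Tendsto.congr' (this.mono fun t h => h.symm) tendsto_const_nhds
  -- convergence of xb
  have hxb_tendsto : Filter.Tendsto xb Filter.atTop (nhds β) := by
    have hlim : Tendsto (fun t => β - 2 * ξ * Real.exp (that - t)) atTop (nhds β) := by
      have h1 : Tendsto (fun t : ℝ => that - t) atTop atBot := by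
        exact (tendsto_atBot_add_const_left atTop that tendsto_neg_atTop_atBot).congr (fun t => by ring)
      have h2 : Tendsto (fun t : ℝ => Real.exp (that - t)) atTop (nhds 0) :=
        Real.tendsto_exp_atBot.comp h1
      have h3 : Tendsto (fun t => β - 2 * ξ * Real.exp (that - t)) atTop
          (nhds (β - 2 * ξ * 0)) := tendsto_const_nhds.sub (h2.const_mul (2 * ξ))
      simpa using h3
    refine Tendsto.congr' ?_ hlim
    filter_upwards [eventually_ge_atTop that] with t ht using (hxb t ht).symm
  refine ⟨hxa_tendsto, hxb_tendsto, ?_⟩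
  -- β ≤ xa 0
  have hlog : L ≤ s / ξ - 1 := Real.log_le_sub_one_of_pos (by positivity)
  have hmul : ξ * (s / ξ) = s := by field_simp
  have : (ξ / 2) * L ≤ (s - ξ) / 2 := by nlinarith
  simp only [hs_def] at this
  linarith
end
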